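/- arXiv:2110.08844 — 2 statements merged into one kernel-verified Lean document; each statement's English description precedes it below -/
import Mathlib

section
/- Define ρ = ν - (z + k_o Bᵀ x), where ν̇ = Sν, d = Uν, ẋ = (A - BK)x + B(k_P e + k_I γ - d̂ + d) with d̂ = U(z + k_o Bᵀ x), and ż = Sz - k_o BᵀB(k_P e + k_I γ) + (S k_o Bᵀ - k_o Bᵀ A + k_o Bᵀ B K)x. Then ρ satisfies the autonomous linear ODE ρ̇ = (S - k_o BᵀB U) ρ; if additionally S - k_o BᵀB U is Hurwitz, then ρ(t) → 0 as t → ∞, i.e., the disturbance observation error converges to zero. -/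
open Matrix Filter

section DOBAux

open NormedSpace

attribute [local instance] Matrix.linftyOpNormedAddCommGroup Matrix.linftyOpNormedRing
  Matrix.linftyOpNormedAlgebra

private lemma DOB.vecMulVec_mulVec' (q n : ℕ) (a : Fin q → ℝ) (b v : Fin n → ℝ) :
    (vecMulVec a b).mulVec v = (b ⬝ᵥ v) • a := by
  funext i
  simp only [vecMulVec, mulVec, dotProduct, Matrix.of_apply, Pi.smul_apply, smul_eq_mul,
    Finset.sum_mul]
  exact Finset.sum_congr rfl fun j _ => by ring

private lemma DOB.cexp_pow_tendsto {μ : ℂ} (hμ : μ.re < 0) (m : ℕ) :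
    Tendsto (fun t : ℝ => Complex.exp (t * μ) * (t : ℂ) ^ m) atTop (nhds 0) := by
  set b : ℝ := -μ.re with hb
  have hb0 : 0 < b := by simpa [hb] using hμ
  have h2 : Tendsto (fun t : ℝ => t ^ m * Real.exp (-(b * t))) atTop (nhds 0) := by
    have hbt : Tendsto (fun t : ℝ => b * t) atTop atTop :=
      (tendsto_const_mul_atTop_of_pos hb0).mpr tendsto_id
    have h := (Real.tendsto_pow_mul_exp_neg_atTop_nhds_zero m).comp hbt
    have h3 : Tendsto (fun t : ℝ => (b ^ m)⁻¹ * ((b * t) ^ m * Real.exp (-(b * t)))) atTop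
        (nhds ((b ^ m)⁻¹ * 0)) := h.const_mul _
    rw [mul_zero] at h3
    refine h3.congr fun t => ?_
    rw [mul_pow]
    field_simp
  apply squeeze_zero_norm' _ h2
  filter_upwards [eventually_ge_atTop (0:ℝ)] with t ht
  rw [norm_mul, norm_pow, Complex.norm_exp,
    Complex.norm_real, Real.norm_eq_abs, abs_of_nonneg ht]
  have : ((t : ℂ) * μ).re = t * μ.re := by simp
  rw [this]
  have : Real.exp (t * μ.re) = Real.exp (-(b * t)) := by rw [hb]; ring_nf
  rw [this, mul_comm]

variable {q : ℕ}

/-- entry-of-matrix as a continuous linear map (ℝ-linear). -/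
private noncomputable def DOB.entryCLM (i j : Fin q) : Matrix (Fin q) (Fin q) ℂ →L[ℝ] ℂ :=
  LinearMap.toContinuousLinearMap
    { toFun := fun X => X i j
      map_add' := fun _ _ => rfl
      map_smul' := fun _ _ => rfl }

@[simp] private lemma DOB.entryCLM_apply (i j : Fin q) (X : Matrix (Fin q) (Fin q) ℂ) :
    DOB.entryCLM i j X = X i j := rfl

private lemma DOB.hasDerivAt_exp_entry (M : Matrix (Fin q) (Fin q) ℂ) (t : ℝ) (i j : Fin q) :
    HasDerivAt (fun s : ℝ => exp (s • M) i j) ((M * exp (t • M)) i j) t :=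
  (DOB.entryCLM i j).hasFDerivAt.comp_hasDerivAt t
    (hasDerivAt_exp_smul_const' (𝕂 := ℝ) M t)

private theorem DOB.sol_formula (M : Matrix (Fin q) (Fin q) ℂ) (ρc : ℝ → Fin q → ℂ)
    (hderiv : ∀ (t : ℝ) (i : Fin q),
      HasDerivAt (fun s => ρc s i) ((M.mulVec (ρc t)) i) t) (t : ℝ) :
    ρc t = (exp (t • M)).mulVec (ρc 0) := by
  set w : ℝ → Fin q → ℂ := fun s => (exp (s • (-M))).mulVec (ρc s) with hw
  have hwd : ∀ (s : ℝ) (i : Fin q), HasDerivAt (fun u => w u i) 0 s := by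
    intro s i
    have h1 : HasDerivAt (fun u => w u i)
        (∑ j, (((-M) * exp (s • (-M))) i j * ρc s j
          + exp (s • (-M)) i j * (M.mulVec (ρc s)) j)) s := by
      simp only [hw, mulVec, dotProduct]
      exact HasDerivAt.fun_sum fun j _ =>
        (DOB.hasDerivAt_exp_entry (-M) s i j).mul (hderiv s j)
    convert h1 using 1
    have hc : exp (s • (-M)) * M = M * exp (s • (-M)) := by
      have : Commute (s • (-M)) M := by
        simpa using (Commute.refl M).neg_left.smul_left s
      exact (this.exp_left).eq
    have : (∑ j, (((-M) * exp (s • (-M))) i j * ρc s j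
          + exp (s • (-M)) i j * (M.mulVec (ρc s)) j))
        = ((-M) * exp (s • (-M))).mulVec (ρc s) i
          + (exp (s • (-M))).mulVec (M.mulVec (ρc s)) i := by
      simp [mulVec, dotProduct, Finset.sum_add_distrib]
    rw [this, Matrix.mulVec_mulVec, hc]
    simp [Matrix.neg_mul, Matrix.neg_mulVec]
  have hconst : ∀ i, w t i = w 0 i := by
    intro i
    exact is_const_of_deriv_eq_zero (fun s => (hwd s i).differentiableAt)
      (fun s => (hwd s i).deriv) t 0
  have hw0 : w 0 = ρc 0 := by
    simp [hw, Matrix.one_mulVec]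
  have hwt : (exp (t • (-M))).mulVec (ρc t) = ρc 0 := by
    funext i; rw [← hw0]; exact hconst i
  have hinv : exp (t • M) * exp (t • (-M)) = 1 := by
    rw [smul_neg]
    erw [← exp_add_of_commute (Commute.refl (t • M)).neg_right, add_neg_cancel, exp_zero]
  calc ρc t = (exp (t • M) * exp (t • (-M))).mulVec (ρc t) := by
        rw [hinv, Matrix.one_mulVec]
    _ = (exp (t • M)).mulVec ((exp (t • (-M))).mulVec (ρc t)) := by
        rw [← Matrix.mulVec_mulVec]
    _ = (exp (t • M)).mulVec (ρc 0) := by rw [hwt]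

private noncomputable def DOB.mulVecEntryCLM (v : Fin q → ℂ) (i : Fin q) :
    Matrix (Fin q) (Fin q) ℂ →L[ℂ] ℂ :=
  LinearMap.toContinuousLinearMap
    { toFun := fun X => X.mulVec v i
      map_add' := fun X Y => by simp [Matrix.add_mulVec]
      map_smul' := fun c X => by simp [Matrix.smul_mulVec] }

@[simp] private lemma DOB.mulVecEntryCLM_apply (v : Fin q → ℂ) (i : Fin q)
    (X : Matrix (Fin q) (Fin q) ℂ) :
    DOB.mulVecEntryCLM v i X = X.mulVec v i := rfl

private theorem DOB.exp_mulVec_tendsto (M : Matrix (Fin q) (Fin q) ℂ)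
    (hspec : ∀ μ ∈ spectrum ℂ M, μ.re < 0) (v : Fin q → ℂ) (i : Fin q) :
    Tendsto (fun t : ℝ => (exp (t • M)).mulVec v i) atTop (nhds 0) := by
  set f : Module.End ℂ (Fin q → ℂ) := Matrix.toLinAlgEquiv' M with hf
  have hspec' : ∀ μ : ℂ, f.HasEigenvalue μ → μ.re < 0 := by
    intro μ h
    apply hspec
    rw [← AlgEquiv.spectrum_eq (Matrix.toLinAlgEquiv' (R := ℂ) (n := Fin q)) M]
    exact h.mem_spectrum
  set P : Submodule ℂ (Fin q → ℂ) :=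
    { carrier := { w | ∀ i, Tendsto (fun t : ℝ => (exp (t • M)).mulVec w i) atTop (nhds 0) }
      add_mem' := by
        intro a b ha hb i
        have := (ha i).add (hb i)
        rw [add_zero] at this
        refine this.congr fun t => ?_
        simp [Matrix.mulVec_add]
      zero_mem' := by intro i; simp [Matrix.mulVec_zero]
      smul_mem' := by
        intro c a ha i
        have := (ha i).const_mul c
        rw [mul_zero] at this
        refine this.congr fun t => ?_
        simp [Matrix.mulVec_smul] } with hP
  suffices hPtop : ∀ w, w ∈ P by exact hPtop v i
  have htop := Module.End.iSup_maxGenEigenspace_eq_top f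
  intro w
  have : (⊤ : Submodule ℂ (Fin q → ℂ)) ≤ P := by
    rw [← htop]
    apply iSup_le
    intro μ
    intro w hw
    by_cases hw0 : w = 0
    · subst hw0; exact P.zero_mem
    have hμre : μ.re < 0 := by
      apply hspec' μ
      apply Module.End.hasEigenvalue_of_hasGenEigenvalue
        (k := Module.finrank ℂ (Fin q → ℂ))
      rw [Module.End.HasGenEigenvalue, Module.End.HasUnifEigenvalue,
        ← Module.End.maxGenEigenspace_eq_genEigenspace_finrank]
      exact Submodule.ne_bot_iff _ |>.mpr ⟨w, hw, hw0⟩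
    obtain ⟨k, hk⟩ := (Module.End.mem_maxGenEigenspace f μ w).mp hw
    set N : Matrix (Fin q) (Fin q) ℂ := M - μ • 1 with hN
    have hNw : (N ^ k).mulVec w = 0 := by
      have : f - μ • 1 = Matrix.toLinAlgEquiv' N := by
        rw [hN, map_sub, hf, _root_.map_smul, _root_.map_one]
      rw [this, ← map_pow] at hk
      rw [← Matrix.toLinAlgEquiv'_apply, hk]
    have hNm : ∀ m : ℕ, k ≤ m → (N ^ m).mulVec w = 0 := by
      intro m hm
      rw [← Nat.sub_add_cancel hm, pow_add, ← Matrix.mulVec_mulVec, hNw, Matrix.mulVec_zero]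
    have key : ∀ (t : ℝ) (j : Fin q), (exp (t • M)).mulVec w j
        = Complex.exp (t * μ) * ∑ m ∈ Finset.range k,
            ((t : ℂ) ^ m * ((m.factorial : ℂ))⁻¹) * (N ^ m).mulVec w j := by
      intro t j
      have hsplit : t • M = algebraMap ℂ (Matrix (Fin q) (Fin q) ℂ) ((t : ℂ) * μ) + t • N := by
        rw [Algebra.algebraMap_eq_smul_one, hN, smul_sub, ← sub_eq_iff_eq_add']
        rw [← smul_assoc]
        norm_num [Complex.real_smul]
      have hcomm : Commute (algebraMap ℂ (Matrix (Fin q) (Fin q) ℂ) ((t : ℂ) * μ)) (t • N) :=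
        Algebra.commute_algebraMap_left _ _
      have hexp : exp (t • M)
          = Complex.exp ((t : ℂ) * μ) • exp (t • N) := by
        erw [hsplit, exp_add_of_commute hcomm, ← algebraMap_exp_comm,
          ← Complex.exp_eq_exp_ℂ, Algebra.algebraMap_eq_smul_one, smul_mul_assoc, one_mul]
        rfl
      rw [hexp, Matrix.smul_mulVec, Pi.smul_apply, smul_eq_mul]
      congr 1
      have hsum : (exp (t • N)).mulVec w j
          = ∑' m : ℕ, ((m.factorial : ℂ))⁻¹ • ((t • N) ^ m).mulVec w j := by
        calc (exp (t • N)).mulVec w j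
            = DOB.mulVecEntryCLM w j (∑' m : ℕ, ((m.factorial : ℂ))⁻¹ • (t • N) ^ m) := by
              rw [exp_eq_tsum ℂ]; rfl
          _ = ∑' m : ℕ, DOB.mulVecEntryCLM w j (((m.factorial : ℂ))⁻¹ • (t • N) ^ m) :=
              (DOB.mulVecEntryCLM w j).map_tsum (expSeries_summable' (𝕂 := ℂ) (t • N))
          _ = ∑' m : ℕ, ((m.factorial : ℂ))⁻¹ • ((t • N) ^ m).mulVec w j := by
              congr 1
              funext m
              rw [← DOB.mulVecEntryCLM_apply w j, _root_.map_smul]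
      rw [hsum]
      rw [tsum_eq_sum (s := Finset.range k) ?zero]
      case zero =>
        intro m hm
        rw [smul_pow, Matrix.smul_mulVec, hNm m (by simpa using hm)]
        simp
      apply Finset.sum_congr rfl
      intro m _
      rw [smul_pow, Matrix.smul_mulVec]
      simp only [Pi.smul_apply, smul_eq_mul, Complex.real_smul, Complex.ofReal_pow]
      ring
    intro j
    have hterm : ∀ m ∈ Finset.range k, Tendsto (fun t : ℝ =>
        Complex.exp (t * μ) * (((t : ℂ) ^ m * ((m.factorial : ℂ))⁻¹) * (N ^ m).mulVec w j))
        atTop (nhds 0) := by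
      intro m _
      have h := (DOB.cexp_pow_tendsto hμre m).mul_const
        (((m.factorial : ℂ))⁻¹ * (N ^ m).mulVec w j)
      rw [zero_mul] at h
      refine h.congr fun t => by ring
    have hsum := tendsto_finset_sum (Finset.range k) hterm
    rw [Finset.sum_const_zero] at hsum
    refine hsum.congr fun t => ?_
    rw [← Finset.mul_sum, ← key t j]
  exact this Submodule.mem_top

end DOBAux

/-- The disturbance observation error `ρ = ν - (z + k_o Bᵀ x)` of the
internal-model disturbance observer satisfies the autonomous linear ODE
`ρ̇ = (S - k_o Bᵀ B U) ρ`; if moreover `S - k_o Bᵀ B U` is Hurwitz, then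
`ρ(t) → 0` as `t → ∞`. -/
theorem disturbance_observer_error_dynamics
    (n q : ℕ)
    (A : Matrix (Fin n) (Fin n) ℝ) (B K : Fin n → ℝ)
    (S : Matrix (Fin q) (Fin q) ℝ) (U ko : Fin q → ℝ)
    (kP kI : ℝ) (hkP : 0 < kP) (hkI : 0 < kI)
    (e γ : ℝ → ℝ)
    (x : ℝ → Fin n → ℝ) (z ν : ℝ → Fin q → ℝ)
    (d : ℝ → ℝ) (hd : ∀ t, d t = U ⬝ᵥ ν t)
    (dhat : ℝ → ℝ) (hdhat : ∀ t, dhat t = U ⬝ᵥ (z t + (B ⬝ᵥ x t) • ko))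
    (hν : ∀ (t : ℝ) (i : Fin q),
      HasDerivAt (fun s => ν s i) (S.mulVec (ν t) i) t)
    (hx : ∀ (t : ℝ) (i : Fin n),
      HasDerivAt (fun s => x s i)
        (((A - vecMulVec B K).mulVec (x t)
          + (kP * e t + kI * γ t - dhat t + d t) • B) i) t)
    (hz : ∀ (t : ℝ) (i : Fin q),
      HasDerivAt (fun s => z s i)
        ((S.mulVec (z t) - ((B ⬝ᵥ B) * (kP * e t + kI * γ t)) • ko
          + (B ⬝ᵥ x t) • S.mulVec ko - (B ⬝ᵥ A.mulVec (x t)) • ko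
          + ((B ⬝ᵥ B) * (K ⬝ᵥ x t)) • ko) i) t)
    (ρ : ℝ → Fin q → ℝ)
    (hρ : ∀ t, ρ t = ν t - (z t + (B ⬝ᵥ x t) • ko)) :
    (∀ (t : ℝ) (i : Fin q),
      HasDerivAt (fun s => ρ s i)
        (((S - (B ⬝ᵥ B) • vecMulVec ko U).mulVec (ρ t)) i) t) ∧
    ((∀ μ ∈ spectrum ℂ
        ((S - (B ⬝ᵥ B) • vecMulVec ko U).map fun r : ℝ => (r : ℂ)), μ.re < 0) →
      ∀ i, Tendsto (fun t => ρ t i) atTop (nhds 0)) := by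
  have part1 : ∀ (t : ℝ) (i : Fin q),
      HasDerivAt (fun s => ρ s i)
        (((S - (B ⬝ᵥ B) • vecMulVec ko U).mulVec (ρ t)) i) t := by
    intro t i
    have hBx : HasDerivAt (fun s => B ⬝ᵥ x s)
        (B ⬝ᵥ ((A - vecMulVec B K).mulVec (x t)
            + (kP * e t + kI * γ t - dhat t + d t) • B)) t := by
      simp only [dotProduct]
      exact HasDerivAt.fun_sum fun j _ => (hx t j).const_mul (B j)
    have h : HasDerivAt (fun s => ρ s i)
        (S.mulVec (ν t) i -
          ((S.mulVec (z t) - ((B ⬝ᵥ B) * (kP * e t + kI * γ t)) • ko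
            + (B ⬝ᵥ x t) • S.mulVec ko - (B ⬝ᵥ A.mulVec (x t)) • ko
            + ((B ⬝ᵥ B) * (K ⬝ᵥ x t)) • ko) i
           + (B ⬝ᵥ ((A - vecMulVec B K).mulVec (x t)
              + (kP * e t + kI * γ t - dhat t + d t) • B)) * ko i)) t := by
      have := ((hν t i).fun_sub ((hz t i).fun_add (hBx.mul_const (ko i))))
      simpa only [hρ, Pi.sub_apply, Pi.add_apply, Pi.smul_apply, smul_eq_mul] using this
    convert h using 1
    rw [hρ, hdhat, hd]
    simp only [Matrix.sub_mulVec, Matrix.mulVec_add, Matrix.mulVec_sub, Matrix.mulVec_smul,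
      Matrix.smul_mulVec, DOB.vecMulVec_mulVec', dotProduct_add, dotProduct_sub,
      dotProduct_smul, Pi.sub_apply, Pi.add_apply, Pi.smul_apply, smul_eq_mul]
    ring
  refine ⟨part1, ?_⟩
  intro hspec i
  set M' : Matrix (Fin q) (Fin q) ℝ := S - (B ⬝ᵥ B) • vecMulVec ko U with hM'
  set Mc : Matrix (Fin q) (Fin q) ℂ := M'.map (fun r : ℝ => (r : ℂ)) with hMc
  set ρc : ℝ → Fin q → ℂ := fun s j => ((ρ s j : ℝ) : ℂ) with hρc
  have hderivc : ∀ (t : ℝ) (j : Fin q),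
      HasDerivAt (fun s => ρc s j) ((Mc.mulVec (ρc t)) j) t := by
    intro t j
    have h1 := part1 t j
    have h2 := Complex.ofRealCLM.hasFDerivAt.comp_hasDerivAt t h1
    convert h2 using 1
    case e'_4 => rfl
    case e'_8 => rfl
    simp only [hMc, hρc, mulVec, dotProduct, Matrix.map_apply, Complex.ofRealCLM_apply]
    push_cast
    rfl
  have hsol := DOB.sol_formula Mc ρc hderivc
  have hdec := DOB.exp_mulVec_tendsto Mc hspec (ρc 0) i
  have hc : Tendsto (fun t => ρc t i) atTop (nhds 0) :=
    hdec.congr fun t => (congrFun (hsol t) i).symm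
  have hre := (Complex.continuous_re.tendsto 0).comp hc
  simp only [Complex.zero_re] at hre
  exact hre.congr fun t => by simp [hρc]
end

section
/- Let L be the Laplacian of a connected undirected graph on N vertices, r a unit vector with rᵀL = 0 (so r = 1_N/√N), and R̃ an N×(N-1) matrix whose columns complete r to an orthonormal basis. Then the matrix M = [[-I - L, -L R̃],[R̃ᵀ L, 0]] of size (2N-1)×(2N-1) is Hurwitz: every eigenvalue of M has negative real part. -/
open Matrix
open scoped ComplexOrder

/-!
Let `v = (x, y)` be an eigenvector of `M` for the eigenvalue `μ`. The off-diagonal blocks of `M`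
are `-B` and `Bᴴ` with `B = L R̃`, so they cancel in `Re ⟪v, M v⟫`, leaving
`Re μ · ‖v‖² = -‖x‖² - Re ⟪x, L x⟫ ≤ -‖x‖²`. If `Re μ ≥ 0` this forces `x = 0`, and then the
first block row reads `B y = 0`. Finally `B` is injective: `L R̃ y = 0` puts `R̃ y` in the kernel
of `L`, i.e. on the line through `r`, and `R̃ᵀ r = 0` gives `y = R̃ᵀ R̃ y = 0`.
-/

section Complexification

variable {m n : Type*}

lemma Matrix.map_ofReal_fromBlocks [DecidableEq n] (A : Matrix n n ℝ) (B : Matrix n m ℝ) :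
    (fromBlocks (-1 - A) (-B) Bᵀ 0).map ((↑) : ℝ → ℂ) =
      fromBlocks (-1 - A.map (↑)) (-B.map (↑)) (B.map (↑))ᴴ 0 := by
  rw [fromBlocks_map, ← conjTranspose_map _ fun x => (Complex.conj_ofReal x).symm,
    conjTranspose_eq_transpose_of_trivial, Matrix.map_sub _ Complex.ofReal_sub,
    Matrix.map_neg _ Complex.ofReal_neg 1, Matrix.map_neg _ Complex.ofReal_neg B,
    Matrix.map_one _ Complex.ofReal_zero Complex.ofReal_one, Matrix.map_zero _ Complex.ofReal_zero]

variable [Fintype n]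

lemma Matrix.map_ofReal_mulVec_re (A : Matrix m n ℝ) (v : n → ℂ) :
    (fun i => (A.map ((↑) : ℝ → ℂ) *ᵥ v) i |>.re) = A *ᵥ fun j => (v j).re := by
  ext i
  simp [mulVec, dotProduct, Complex.re_sum]

lemma Matrix.map_ofReal_mulVec_im (A : Matrix m n ℝ) (v : n → ℂ) :
    (fun i => (A.map ((↑) : ℝ → ℂ) *ᵥ v) i |>.im) = A *ᵥ fun j => (v j).im := by
  ext i
  simp [mulVec, dotProduct, Complex.im_sum]

lemma Matrix.mulVec_map_ofReal_injective {A : Matrix m n ℝ}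
    (hA : Function.Injective A.mulVec) : Function.Injective (A.map ((↑) : ℝ → ℂ)).mulVec := by
  intro v w hvw
  have hre := congrFun <| hA <| by
    simpa only [map_ofReal_mulVec_re] using congrArg (fun u i => (u i).re) hvw
  have him := congrFun <| hA <| by
    simpa only [map_ofReal_mulVec_im] using congrArg (fun u i => (u i).im) hvw
  exact funext fun j => Complex.ext (hre j) (him j)

lemma Matrix.PosSemidef.map_ofReal [DecidableEq n] {A : Matrix n n ℝ} (hA : A.PosSemidef) :
    (A.map ((↑) : ℝ → ℂ)).PosSemidef := by
  obtain ⟨B, rfl⟩ : ∃ B : Matrix n n ℝ, A = star B * B := by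
    open scoped MatrixOrder Matrix.Norms.L2Operator in
    exact CStarAlgebra.nonneg_iff_eq_star_mul_self.mp hA.nonneg
  have hmap : (star B * B).map ((↑) : ℝ → ℂ) = (B.map (↑))ᴴ * B.map (↑) := by
    rw [star_eq_conjTranspose, ← conjTranspose_map _ fun x => (Complex.conj_ofReal x).symm]
    exact Matrix.map_mul (f := Complex.ofRealHom)
  rw [hmap]
  exact posSemidef_conjTranspose_mul_self _

end Complexification

section BlockMatrix

variable {n m : Type*} [Fintype n] [Fintype m] [DecidableEq n]

lemma Matrix.exists_mulVec_eq_smul_of_mem_spectrum {K : Type*} [Field K] {A : Matrix n n K}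
    {μ : K} (hμ : μ ∈ spectrum K A) : ∃ v ≠ 0, A *ᵥ v = μ • v := by
  rw [← spectrum_toLin', ← Module.End.hasEigenvalue_iff_mem_spectrum] at hμ
  obtain ⟨v, hv⟩ := hμ.exists_hasEigenvector
  exact ⟨v, hv.2, by simpa using hv.apply_eq_smul⟩

lemma Matrix.re_star_dotProduct_fromBlocks_mulVec (A : Matrix n n ℂ) (B : Matrix n m ℂ)
    (x : n → ℂ) (y : m → ℂ) :
    (star (Sum.elim x y) ⬝ᵥ fromBlocks (-1 - A) (-B) Bᴴ 0 *ᵥ Sum.elim x y).re =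
      -(star x ⬝ᵥ x).re - (star x ⬝ᵥ A *ᵥ x).re := by
  have hB : star y ⬝ᵥ Bᴴ *ᵥ x = star (star x ⬝ᵥ B *ᵥ y) := by
    rw [star_dotProduct, star_mulVec, conjTranspose_conjTranspose, dotProduct_mulVec]
  simp only [fromBlocks_mulVec, Sum.elim_comp_inl, Sum.elim_comp_inr, Function.star_sumElim,
    sumElim_dotProduct_sumElim, sub_mulVec, neg_mulVec, one_mulVec, zero_mulVec, add_zero,
    dotProduct_add, dotProduct_sub, dotProduct_neg, hB]
  simp only [Complex.add_re, Complex.sub_re, Complex.neg_re, Complex.star_def, Complex.conj_re]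
  ring

variable [DecidableEq m]

theorem Matrix.re_lt_zero_of_mem_spectrum_fromBlocks {A : Matrix n n ℂ} (hA : A.PosSemidef)
    {B : Matrix n m ℂ} (hB : Function.Injective B.mulVec) {μ : ℂ}
    (hμ : μ ∈ spectrum ℂ (fromBlocks (-1 - A) (-B) Bᴴ 0)) : μ.re < 0 := by
  obtain ⟨v, hv, hMv⟩ := exists_mulVec_eq_smul_of_mem_spectrum hμ
  obtain ⟨x, y, rfl⟩ : ∃ x y, v = Sum.elim x y := ⟨_, _, (Sum.elim_comp_inl_inr v).symm⟩
  by_contra! hμre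
  have hx : x = 0 := by
    have energy := re_star_dotProduct_fromBlocks_mulVec A B x y
    have hvv := Complex.nonneg_iff.mp (dotProduct_star_self_nonneg (Sum.elim x y))
    have hxx := Complex.nonneg_iff.mp (dotProduct_star_self_nonneg x)
    have hAx : 0 ≤ (star x ⬝ᵥ A *ᵥ x).re := hA.re_dotProduct_nonneg x
    rw [hMv, dotProduct_smul, smul_eq_mul, Complex.mul_re, ← hvv.2, mul_zero, sub_zero] at energy
    have hxx_re : (star x ⬝ᵥ x).re = 0 := by nlinarith [mul_nonneg hμre hvv.1]
    exact dotProduct_star_self_eq_zero.mp (Complex.ext hxx_re hxx.2.symm)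
  have hy : y = 0 := by
    have hfirst : (-1 - A) *ᵥ x + -B *ᵥ y = μ • x := by
      funext i
      simpa [fromBlocks_mulVec] using congrFun hMv (Sum.inl i)
    rw [hx, mulVec_zero, smul_zero, zero_add, neg_mulVec, neg_eq_zero] at hfirst
    exact hB (hfirst.trans (mulVec_zero B).symm)
  exact hv (by rw [hx, hy, Sum.elim_zero_zero])

theorem Matrix.re_lt_zero_of_mem_spectrum_map_ofReal_fromBlocks {A : Matrix n n ℝ}
    (hA : A.PosSemidef) {B : Matrix n m ℝ} (hB : Function.Injective B.mulVec) {μ : ℂ}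
    (hμ : μ ∈ spectrum ℂ ((fromBlocks (-1 - A) (-B) Bᵀ 0).map ((↑) : ℝ → ℂ))) : μ.re < 0 := by
  rw [map_ofReal_fromBlocks] at hμ
  exact re_lt_zero_of_mem_spectrum_fromBlocks hA.map_ofReal (mulVec_map_ofReal_injective hB) hμ

end BlockMatrix

lemma Matrix.mulVec_mul_injective {K n m : Type*} [CommRing K] [Fintype n] [Fintype m]
    [DecidableEq m] {L : Matrix n n K} {R : Matrix n m K} {S : Matrix m n K}
    (hker : ∀ v : n → K, L *ᵥ v = 0 → ∃ c : K, v = fun _ => c)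
    (hSR : S * R = 1) (hS1 : S *ᵥ (fun _ => 1) = 0) : Function.Injective (L * R).mulVec := by
  refine (injective_iff_map_eq_zero (L * R).mulVecLin).mpr fun y hy => ?_
  rw [mulVecLin_apply, ← mulVec_mulVec] at hy
  obtain ⟨c, hc⟩ := hker _ hy
  calc y = S *ᵥ (R *ᵥ y) := by rw [mulVec_mulVec, hSR, one_mulVec]
    _ = c • S *ᵥ (fun _ => 1) := by rw [hc, ← mulVec_smul]; congr; ext; simp
    _ = 0 := by rw [hS1, smul_zero]

theorem consensus_block_matrix_hurwitz_general
    (N : ℕ) (hN : 0 < N)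
    (L : Matrix (Fin N) (Fin N) ℝ)
    (hLsymm : L.IsSymm)
    (hLpsd : L.PosSemidef)
    (hker : ∀ v : Fin N → ℝ, L.mulVec v = 0 → ∃ c : ℝ, v = fun _ => c)
    (r : Fin N → ℝ) (hr : r = fun _ => 1 / Real.sqrt N)
    (R : Matrix (Fin N) (Fin (N - 1)) ℝ)
    (hRortho : Rᵀ * R = 1)
    (hRr : Rᵀ.mulVec r = 0)
    (M : Matrix (Fin N ⊕ Fin (N - 1)) (Fin N ⊕ Fin (N - 1)) ℝ)
    (hM : M = fromBlocks (-1 - L) (-(L * R)) (Rᵀ * L)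
        (0 : Matrix (Fin (N - 1)) (Fin (N - 1)) ℝ)) :
    ∀ μ ∈ spectrum ℂ (M.map fun x : ℝ => (x : ℂ)), μ.re < 0 := by
  intro μ hμ
  have hR1 : Rᵀ *ᵥ (fun _ => 1) = 0 := by
    have hsqrt : Real.sqrt N ≠ 0 := by positivity
    have h1 : (fun _ : Fin N => (1 : ℝ)) = Real.sqrt N • r := by
      ext; simp [hr, hsqrt]
    rw [h1, mulVec_smul, hRr, smul_zero]
  have hRL : Rᵀ * L = (L * R)ᵀ := by rw [transpose_mul, hLsymm.eq]
  rw [hM, hRL] at hμ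
  exact re_lt_zero_of_mem_spectrum_map_ofReal_fromBlocks hLpsd
    (mulVec_mul_injective hker hRortho hR1) hμ

/-- Let `L` be the Laplacian of a connected undirected graph on `N` vertices
(symmetric PSD, `L 1 = 0`, kernel spanned by `1`), `r = 1/√N · 1` the unit
vector with `rᵀ L = 0`, and `R̃` an orthonormal completion of `r`. Then the
block matrix `M = [[-I - L, -L R̃],[R̃ᵀ L, 0]]` is Hurwitz. -/
theorem consensus_block_matrix_hurwitz
    (N : ℕ) (hN : 0 < N)
    (L : Matrix (Fin N) (Fin N) ℝ)
    (hLsymm : L.IsSymm)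
    (hLpsd : L.PosSemidef)
    (hL1 : L.mulVec (fun _ => 1) = 0)
    (hker : ∀ v : Fin N → ℝ, L.mulVec v = 0 → ∃ c : ℝ, v = fun _ => c)
    (r : Fin N → ℝ) (hr : r = fun _ => 1 / Real.sqrt N)
    (hrL : Matrix.vecMul r L = 0)
    (R : Matrix (Fin N) (Fin (N - 1)) ℝ)
    (hRortho : Rᵀ * R = 1)
    (hRr : Rᵀ.mulVec r = 0)
    (hcomplete : R * Rᵀ + vecMulVec r r = 1)
    (M : Matrix (Fin N ⊕ Fin (N - 1)) (Fin N ⊕ Fin (N - 1)) ℝ)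
    (hM : M = fromBlocks (-1 - L) (-(L * R)) (Rᵀ * L)
        (0 : Matrix (Fin (N - 1)) (Fin (N - 1)) ℝ)) :
    ∀ μ ∈ spectrum ℂ (M.map fun x : ℝ => (x : ℂ)), μ.re < 0 :=
  consensus_block_matrix_hurwitz_general N hN L hLsymm hLpsd hker r hr R hRortho hRr M hM
end
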